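/- For every vertex v₀ of Λ and every simple random walk (X_t) on Λ started at v₀, almost surely limsup_{t→∞} depth(X_t)/t ≤ 1/7. -/

import Mathlib

open MeasureTheory Filter Topology
open scoped ENNReal Classical

noncomputable instance : MeasurableSpace ℤ_[2] := borel ℤ_[2]
instance : BorelSpace ℤ_[2] := ⟨rfl⟩

/-- The dyadic lattice graph `Λ` on vertex set `ℤ × ℤ₂`. -/
def Lambda : SimpleGraph (ℤ × ℤ_[2]) where
  Adj u v :=
    (u.1 = v.1 ∧ (v.2 = u.2 + 1 ∨ v.2 = u.2 - 1)) ∨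
    (v.1 = u.1 + 1 ∧ v.2 = 2 * u.2) ∨ (u.1 = v.1 + 1 ∧ u.2 = 2 * v.2)
  symm := by
    constructor; rintro ⟨m, b⟩ ⟨n, c⟩ (⟨h1, h2 | h2⟩ | ⟨h1, h2⟩ | ⟨h1, h2⟩)
    · exact Or.inl ⟨h1.symm, Or.inr (by rw [h2]; ring)⟩
    · exact Or.inl ⟨h1.symm, Or.inl (by rw [h2]; ring)⟩
    · exact Or.inr (Or.inr ⟨h1, h2⟩)
    · exact Or.inr (Or.inl ⟨h1, h2⟩)
  loopless := by
    constructor; rintro ⟨m, b⟩ (⟨h1, h2 | h2⟩ | ⟨h1, h2⟩ | ⟨h1, h2⟩)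
    · exact one_ne_zero (by linear_combination -h2)
    · exact one_ne_zero (by linear_combination h2)
    · omega
    · omega

/-- The degree (3 or 4) of a vertex of `Λ`. -/
noncomputable def lamDeg (u : ℤ × ℤ_[2]) : ℕ := if (2 : ℤ_[2]) ∣ u.2 then 4 else 3

/-- `X` is a simple random walk on `Λ`, defined on `(Ω, P)`, started at `v₀`. -/
def IsWalkL {Ω : Type} [MeasurableSpace Ω] (P : Measure Ω) (X : ℕ → Ω → ℤ × ℤ_[2])
    (v₀ : ℤ × ℤ_[2]) : Prop :=
  (∀ t, Measurable (X t)) ∧ P {ω | X 0 ω = v₀} = 1 ∧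
    ∀ t (u w : ℤ × ℤ_[2]),
      P {ω | X (t + 1) ω = w ∧ X t ω = u} =
        if Lambda.Adj u w then P {ω | X t ω = u} / (lamDeg u : ℝ≥0∞) else 0

open Real


lemma two_dvd_iff_toZMod (x : ℤ_[2]) : (2 : ℤ_[2]) ∣ x ↔ PadicInt.toZMod x = 0 := by
  rw [← RingHom.mem_ker, PadicInt.ker_toZMod, PadicInt.maximalIdeal_eq_span_p,
    Ideal.mem_span_singleton]
  norm_num

lemma two_dvd_add_one {x : ℤ_[2]} (h : ¬ (2 : ℤ_[2]) ∣ x) : (2 : ℤ_[2]) ∣ (x + 1) := by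
  rw [two_dvd_iff_toZMod] at h ⊢
  rw [map_add, map_one]
  revert h; generalize (PadicInt.toZMod x) = y; revert y; decide

lemma two_dvd_sub_one {x : ℤ_[2]} (h : ¬ (2 : ℤ_[2]) ∣ x) : (2 : ℤ_[2]) ∣ (x - 1) := by
  rw [two_dvd_iff_toZMod] at h ⊢
  rw [map_sub, map_one]
  revert h; generalize (PadicInt.toZMod x) = y; revert y; decide

lemma not_two_dvd_add_one {x : ℤ_[2]} (h : (2 : ℤ_[2]) ∣ x) : ¬ (2 : ℤ_[2]) ∣ (x + 1) := by
  rw [two_dvd_iff_toZMod] at h ⊢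
  rw [map_add, map_one, h]; decide

lemma not_two_dvd_sub_one {x : ℤ_[2]} (h : (2 : ℤ_[2]) ∣ x) : ¬ (2 : ℤ_[2]) ∣ (x - 1) := by
  rw [two_dvd_iff_toZMod] at h ⊢
  rw [map_sub, map_one, h]; decide

lemma two_nz : (2 : ℤ_[2]) ≠ 0 := two_ne_zero

/-- half of an even 2-adic integer (0 otherwise) -/
noncomputable def phalf (b : ℤ_[2]) : ℤ_[2] :=
  if h : (2 : ℤ_[2]) ∣ b then h.choose else 0

lemma phalf_spec {b : ℤ_[2]} (h : (2 : ℤ_[2]) ∣ b) : 2 * phalf b = b := by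
  rw [phalf, dif_pos h]; exact h.choose_spec.symm

lemma phalf_eq {b c : ℤ_[2]} (h : b = 2 * c) : phalf b = c := by
  have hd : (2 : ℤ_[2]) ∣ b := ⟨c, h⟩
  have := phalf_spec hd
  exact mul_left_cancel₀ two_nz (by rw [this, h])

noncomputable def nbrs (u : ℤ × ℤ_[2]) : Finset (ℤ × ℤ_[2]) :=
  if (2 : ℤ_[2]) ∣ u.2 then
    {(u.1, u.2 + 1), (u.1, u.2 - 1), (u.1 + 1, 2 * u.2), (u.1 - 1, phalf u.2)}
  else {(u.1, u.2 + 1), (u.1, u.2 - 1), (u.1 + 1, 2 * u.2)}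

lemma add_one_ne_sub_one (b : ℤ_[2]) : b + 1 ≠ b - 1 := by
  intro h
  exact two_nz (by linear_combination h)

lemma mem_nbrs (u w : ℤ × ℤ_[2]) : w ∈ nbrs u ↔ Lambda.Adj u w := by
  obtain ⟨m, b⟩ := u; obtain ⟨n, c⟩ := w
  show _ ↔ (m = n ∧ (c = b + 1 ∨ c = b - 1)) ∨ (n = m + 1 ∧ c = 2 * b) ∨ (m = n + 1 ∧ b = 2 * c)
  rw [nbrs]
  split_ifs with h
  · simp only [Finset.mem_insert, Finset.mem_singleton, Prod.mk.injEq]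
    constructor
    · rintro (⟨h1, h2⟩ | ⟨h1, h2⟩ | ⟨h1, h2⟩ | ⟨h1, h2⟩)
      · exact Or.inl ⟨h1.symm, Or.inl h2⟩
      · exact Or.inl ⟨h1.symm, Or.inr h2⟩
      · exact Or.inr (Or.inl ⟨h1, h2⟩)
      · refine Or.inr (Or.inr ⟨by omega, ?_⟩)
        rw [h2, phalf_spec h]
    · rintro (⟨h1, h2 | h2⟩ | ⟨h1, h2⟩ | ⟨h1, h2⟩)
      · exact Or.inl ⟨h1.symm, h2⟩
      · exact Or.inr (Or.inl ⟨h1.symm, h2⟩)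
      · exact Or.inr (Or.inr (Or.inl ⟨h1, h2⟩))
      · exact Or.inr (Or.inr (Or.inr ⟨by omega, (phalf_eq h2).symm⟩))
  · simp only [Finset.mem_insert, Finset.mem_singleton, Prod.mk.injEq]
    constructor
    · rintro (⟨h1, h2⟩ | ⟨h1, h2⟩ | ⟨h1, h2⟩)
      · exact Or.inl ⟨h1.symm, Or.inl h2⟩
      · exact Or.inl ⟨h1.symm, Or.inr h2⟩
      · exact Or.inr (Or.inl ⟨h1, h2⟩)
    · rintro (⟨h1, h2 | h2⟩ | ⟨h1, h2⟩ | ⟨h1, h2⟩)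
      · exact Or.inl ⟨h1.symm, h2⟩
      · exact Or.inr (Or.inl ⟨h1.symm, h2⟩)
      · exact Or.inr (Or.inr ⟨h1, h2⟩)
      · exact absurd ⟨c, h2⟩ h

lemma card_nbrs (u : ℤ × ℤ_[2]) : (nbrs u).card = lamDeg u := by
  obtain ⟨m, b⟩ := u
  rw [nbrs, lamDeg]
  split_ifs with h
  · rw [show ({(m, b + 1), (m, b - 1), (m + 1, 2 * b), (m - 1, phalf b)} : Finset (ℤ × ℤ_[2]))
      = insert (m, b+1) (insert (m, b-1) (insert (m+1, 2*b) {(m-1, phalf b)})) from rfl]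
    rw [Finset.card_insert_of_notMem, Finset.card_insert_of_notMem,
      Finset.card_insert_of_notMem, Finset.card_singleton]
    · simp only [Finset.mem_singleton, Prod.mk.injEq, not_and]; omega
    · simp only [Finset.mem_insert, Finset.mem_singleton, Prod.mk.injEq, not_or, not_and]
      refine ⟨fun _ => by omega, fun _ => by omega⟩
    · simp only [Finset.mem_insert, Finset.mem_singleton, Prod.mk.injEq, not_or, not_and]
      exact ⟨fun _ => add_one_ne_sub_one b, fun h' => by omega, fun h' => by omega⟩
  · rw [show ({(m, b + 1), (m, b - 1), (m + 1, 2 * b)} : Finset (ℤ × ℤ_[2]))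
      = insert (m, b+1) (insert (m, b-1) {(m+1, 2*b)}) from rfl]
    rw [Finset.card_insert_of_notMem, Finset.card_insert_of_notMem, Finset.card_singleton]
    · simp only [Finset.mem_singleton, Prod.mk.injEq, not_and]; omega
    · simp only [Finset.mem_insert, Finset.mem_singleton, Prod.mk.injEq, not_or, not_and]
      exact ⟨fun _ => add_one_ne_sub_one b, fun h' => by omega⟩


lemma chord (l x : ℝ) (hx : |x| ≤ 2) :
    exp (l * x) ≤ cosh (2 * l) + x / 2 * sinh (2 * l) := by
  rw [abs_le] at hx
  have ha : (0:ℝ) ≤ (2 - x) / 4 := by linarith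
  have hb : (0:ℝ) ≤ (2 + x) / 4 := by linarith
  have hab : (2 - x) / 4 + (2 + x) / 4 = 1 := by ring
  have := convexOn_exp.2 (Set.mem_univ (-(2*l))) (Set.mem_univ (2*l)) ha hb hab
  simp only [smul_eq_mul] at this
  have harg : (2 - x) / 4 * (-(2*l)) + (2 + x) / 4 * (2*l) = l * x := by ring
  rw [harg] at this
  rw [Real.cosh_eq, Real.sinh_eq]
  nlinarith [this]

lemma term_bound (l gu gw : ℝ) (hl : 0 ≤ l) (hd : |gw - gu - 1/7| ≤ 2) :
    exp (l * gw) ≤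
      exp (l * gu) * exp (l / 7) * (cosh (2*l) + (gw - gu - 1/7)/2 * sinh (2*l)) := by
  have h1 := chord l (gw - gu - 1/7) hd
  have h2 : exp (l * gw) = exp (l * gu) * exp (l / 7) * exp (l * (gw - gu - 1/7)) := by
    rw [← Real.exp_add, ← Real.exp_add]; ring_nf
  rw [h2]
  have hpos : (0:ℝ) < exp (l * gu) * exp (l / 7) := by positivity
  exact mul_le_mul_of_nonneg_left h1 hpos.le

lemma sum4_bound (l gu g1 g2 g3 g4 : ℝ) (hl : 0 ≤ l)
    (h1 : |g1 - gu - 1/7| ≤ 2) (h2 : |g2 - gu - 1/7| ≤ 2)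
    (h3 : |g3 - gu - 1/7| ≤ 2) (h4 : |g4 - gu - 1/7| ≤ 2)
    (hS : g1 + g2 + g3 + g4 - 4*gu - 4/7 ≤ 0) :
    exp (l*g1) + exp (l*g2) + exp (l*g3) + exp (l*g4) ≤
      4 * (cosh (2*l) * exp (l/7)) * exp (l * gu) := by
  have t1 := term_bound l gu g1 hl h1
  have t2 := term_bound l gu g2 hl h2
  have t3 := term_bound l gu g3 hl h3
  have t4 := term_bound l gu g4 hl h4
  have hs : 0 ≤ exp (l*gu) * exp (l/7) * sinh (2*l) :=
    mul_nonneg (by positivity) (Real.sinh_nonneg_iff.2 (by linarith))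
  nlinarith [t1, t2, t3, t4, hs]

lemma sum3_bound (l gu g1 g2 g3 : ℝ) (hl : 0 ≤ l)
    (h1 : |g1 - gu - 1/7| ≤ 2) (h2 : |g2 - gu - 1/7| ≤ 2)
    (h3 : |g3 - gu - 1/7| ≤ 2)
    (hS : g1 + g2 + g3 - 3*gu - 3/7 ≤ 0) :
    exp (l*g1) + exp (l*g2) + exp (l*g3) ≤
      3 * (cosh (2*l) * exp (l/7)) * exp (l * gu) := by
  have t1 := term_bound l gu g1 hl h1
  have t2 := term_bound l gu g2 hl h2
  have t3 := term_bound l gu g3 hl h3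
  have hs : 0 ≤ exp (l*gu) * exp (l/7) * sinh (2*l) :=
    mul_nonneg (by positivity) (Real.sinh_nonneg_iff.2 (by linarith))
  nlinarith [t1, t2, t3, hs]

noncomputable def gfun (u : ℤ × ℤ_[2]) : ℝ :=
  u.1 + (if (2 : ℤ_[2]) ∣ u.2 then -(4/21) else 0)

lemma sum_nbrs_even {b : ℤ_[2]} (h : (2 : ℤ_[2]) ∣ b) (m : ℤ) (f : ℤ × ℤ_[2] → ℝ) :
    ∑ w ∈ nbrs (m, b), f w = f (m, b+1) + f (m, b-1) + f (m+1, 2*b) + f (m-1, phalf b) := by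
  rw [nbrs, if_pos h]
  rw [show ({(m, b + 1), (m, b - 1), (m + 1, 2 * b), (m - 1, phalf b)} : Finset (ℤ × ℤ_[2]))
      = insert (m, b+1) (insert (m, b-1) (insert (m+1, 2*b) {(m-1, phalf b)})) from rfl]
  rw [Finset.sum_insert, Finset.sum_insert, Finset.sum_insert, Finset.sum_singleton]
  · ring
  · simp only [Finset.mem_singleton, Prod.mk.injEq, not_and]; omega
  · simp only [Finset.mem_insert, Finset.mem_singleton, Prod.mk.injEq, not_or, not_and]
    refine ⟨fun _ => by omega, fun _ => by omega⟩
  · simp only [Finset.mem_insert, Finset.mem_singleton, Prod.mk.injEq, not_or, not_and]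
    exact ⟨fun _ => add_one_ne_sub_one b, fun h' => by omega, fun h' => by omega⟩

lemma sum_nbrs_odd {b : ℤ_[2]} (h : ¬ (2 : ℤ_[2]) ∣ b) (m : ℤ) (f : ℤ × ℤ_[2] → ℝ) :
    ∑ w ∈ nbrs (m, b), f w = f (m, b+1) + f (m, b-1) + f (m+1, 2*b) := by
  rw [nbrs, if_neg h]
  rw [show ({(m, b + 1), (m, b - 1), (m + 1, 2 * b)} : Finset (ℤ × ℤ_[2]))
      = insert (m, b+1) (insert (m, b-1) {(m+1, 2*b)}) from rfl]
  rw [Finset.sum_insert, Finset.sum_insert, Finset.sum_singleton]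
  · ring
  · simp only [Finset.mem_singleton, Prod.mk.injEq, not_and]; omega
  · simp only [Finset.mem_insert, Finset.mem_singleton, Prod.mk.injEq, not_or, not_and]
    exact ⟨fun _ => add_one_ne_sub_one b, fun h' => by omega⟩

lemma key_vertex (l : ℝ) (hl : 0 ≤ l) (u : ℤ × ℤ_[2]) :
    ∑ w ∈ nbrs u, exp (l * gfun w) ≤
      (lamDeg u : ℝ) * (cosh (2*l) * exp (l/7)) * exp (l * gfun u) := by
  obtain ⟨m, b⟩ := u
  by_cases hb : (2 : ℤ_[2]) ∣ b
  · have h2b : (2 : ℤ_[2]) ∣ 2 * b := dvd_mul_right 2 b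
    have hgu : gfun (m, b) = (m : ℝ) - 4/21 := by simp [gfun, hb]; ring
    have hg1 : gfun (m, b+1) = (m : ℝ) := by simp [gfun, not_two_dvd_add_one hb]
    have hg2 : gfun (m, b-1) = (m : ℝ) := by simp [gfun, not_two_dvd_sub_one hb]
    have hg3 : gfun (m+1, 2*b) = (m : ℝ) + 1 - 4/21 := by
      simp [gfun, h2b]; push_cast; ring
    rw [sum_nbrs_even hb, hgu, hg1, hg2, hg3]
    rw [lamDeg, if_pos hb]
    by_cases hh : (2 : ℤ_[2]) ∣ phalf b
    · have hg4 : gfun (m-1, phalf b) = (m : ℝ) - 1 - 4/21 := by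
        simp only [gfun, if_pos hh]; push_cast; ring
      rw [hg4]
      push_cast
      refine sum4_bound l _ _ _ _ _ hl ?_ ?_ ?_ ?_ (by linarith)
      all_goals rw [abs_le]; constructor <;> linarith
    · have hg4 : gfun (m-1, phalf b) = (m : ℝ) - 1 := by
        simp only [gfun, if_neg hh]; push_cast; ring
      rw [hg4]
      push_cast
      refine sum4_bound l _ _ _ _ _ hl ?_ ?_ ?_ ?_ (by linarith)
      all_goals rw [abs_le]; constructor <;> linarith
  · have h2b : (2 : ℤ_[2]) ∣ 2 * b := dvd_mul_right 2 b
    have hgu : gfun (m, b) = (m : ℝ) := by simp [gfun, hb]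
    have hg1 : gfun (m, b+1) = (m : ℝ) - 4/21 := by
      simp [gfun, two_dvd_add_one hb]; ring
    have hg2 : gfun (m, b-1) = (m : ℝ) - 4/21 := by
      simp [gfun, two_dvd_sub_one hb]; ring
    have hg3 : gfun (m+1, 2*b) = (m : ℝ) + 1 - 4/21 := by
      simp [gfun, h2b]; push_cast; ring
    rw [sum_nbrs_odd hb, hgu, hg1, hg2, hg3]
    rw [lamDeg, if_neg hb]
    push_cast
    refine sum3_bound l _ _ _ _ hl ?_ ?_ ?_ (by linarith)
    all_goals rw [abs_le]; constructor <;> linarith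

noncomputable def ballF (v₀ : ℤ × ℤ_[2]) : ℕ → Finset (ℤ × ℤ_[2])
  | 0 => {v₀}
  | t+1 => (ballF v₀ t).biUnion nbrs

lemma nbrs_subset_ball (v₀ : ℤ × ℤ_[2]) {t : ℕ} {u : ℤ × ℤ_[2]} (hu : u ∈ ballF v₀ t) :
    nbrs u ⊆ ballF v₀ (t+1) := fun w hw => Finset.mem_biUnion.2 ⟨u, hu, hw⟩

section Walk
variable {Ω : Type} [MeasurableSpace Ω] {P : Measure Ω} [IsProbabilityMeasure P]
  {X : ℕ → Ω → ℤ × ℤ_[2]} {v₀ : ℤ × ℤ_[2]} (hX : IsWalkL P X v₀)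

/-- real probability of being at `u` at time `t` -/
noncomputable def pf (P : Measure Ω) (X : ℕ → Ω → ℤ × ℤ_[2]) (t : ℕ) (u : ℤ × ℤ_[2]) : ℝ :=
  (P {ω | X t ω = u}).toReal

lemma pf_nonneg (t u) : 0 ≤ pf P X t u := ENNReal.toReal_nonneg

include hX

lemma meas_ev (t : ℕ) (u : ℤ × ℤ_[2]) : MeasurableSet {ω | X t ω = u} :=
  hX.1 t (measurableSet_singleton u)

lemma lamDeg_pos (u : ℤ × ℤ_[2]) : (0:ℝ) < (lamDeg u : ℝ) := by
  rw [lamDeg]; split_ifs <;> norm_num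

lemma jointReal (t : ℕ) (u w : ℤ × ℤ_[2]) :
    (P {ω | X (t+1) ω = w ∧ X t ω = u}).toReal =
      if Lambda.Adj u w then pf P X t u / (lamDeg u : ℝ) else 0 := by
  rw [hX.2.2 t u w]
  split_ifs with h
  · rw [ENNReal.toReal_div]
    simp [pf]
  · simp

lemma disj_ev (t : ℕ) : (↑(s : Finset (ℤ × ℤ_[2])) : Set (ℤ × ℤ_[2])).PairwiseDisjoint
    (fun u => {ω | X t ω = u}) := by
  intro u _ u' _ huu'
  refine Set.disjoint_left.2 fun ω h1 h2 => huu' ?_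
  exact h1.symm.trans h2

lemma sum_pf_eq_measure (t : ℕ) (s : Finset (ℤ × ℤ_[2])) :
    P (⋃ u ∈ s, {ω | X t ω = u}) = ∑ u ∈ s, P {ω | X t ω = u} :=
  measure_biUnion_finset (disj_ev hX t) (fun u _ => meas_ev hX t u)

lemma sum_pf_le_one (t : ℕ) (s : Finset (ℤ × ℤ_[2])) : ∑ u ∈ s, pf P X t u ≤ 1 := by
  have h1 : ∑ u ∈ s, P {ω | X t ω = u} ≤ 1 := by
    rw [← sum_pf_eq_measure hX t s]; exact prob_le_one
  have h2 : (∑ u ∈ s, P {ω | X t ω = u}).toReal = ∑ u ∈ s, pf P X t u :=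
    ENNReal.toReal_sum (fun u _ => measure_ne_top P _)
  rw [← h2]
  exact ENNReal.toReal_le_of_le_ofReal one_pos.le (by simpa using h1)

/-- one-step joint probabilities, summed over starting points -/
noncomputable def qf (P : Measure Ω) (X : ℕ → Ω → ℤ × ℤ_[2]) (v₀ : ℤ × ℤ_[2])
    (t : ℕ) (w : ℤ × ℤ_[2]) : ℝ :=
  ∑ u ∈ ballF v₀ t, if Lambda.Adj u w then pf P X t u / (lamDeg u : ℝ) else 0

lemma qf_le (t : ℕ) (w : ℤ × ℤ_[2]) : qf P X v₀ t w ≤ pf P X (t+1) w := by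
  have hset : ∀ u : ℤ × ℤ_[2],
      {ω | X (t+1) ω = w ∧ X t ω = u} = {ω | X (t+1) ω = w} ∩ {ω | X t ω = u} := fun u => rfl
  have hdisj : (↑(ballF v₀ t) : Set (ℤ × ℤ_[2])).PairwiseDisjoint
      (fun u => {ω | X (t+1) ω = w} ∩ {ω | X t ω = u}) := by
    intro u _ u' _ huu'
    exact ((disj_ev hX (s := ballF v₀ t) t) (by assumption) (by assumption)
      huu').mono inf_le_right inf_le_right
  have hm : P (⋃ u ∈ ballF v₀ t, ({ω | X (t+1) ω = w} ∩ {ω | X t ω = u})) =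
      ∑ u ∈ ballF v₀ t, P ({ω | X (t+1) ω = w} ∩ {ω | X t ω = u}) :=
    measure_biUnion_finset hdisj
      (fun u _ => (meas_ev hX (t+1) w).inter (meas_ev hX t u))
  have h1 : qf P X v₀ t w =
      (P (⋃ u ∈ ballF v₀ t, ({ω | X (t+1) ω = w} ∩ {ω | X t ω = u}))).toReal := by
    rw [hm, ENNReal.toReal_sum (fun u _ => measure_ne_top P _), qf]
    refine Finset.sum_congr rfl fun u _ => ?_
    rw [← hset u, jointReal hX t u w]
  rw [h1, pf]
  refine ENNReal.toReal_le_toReal (measure_ne_top P _) (measure_ne_top P _) |>.2 ?_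
  refine measure_mono ?_
  intro ω hω
  simp only [Set.mem_iUnion] at hω
  obtain ⟨u, _, h1, _⟩ := hω
  exact h1

lemma sum_qf (t : ℕ) (ht : ∑ u ∈ ballF v₀ t, pf P X t u = 1) :
    ∑ w ∈ ballF v₀ (t+1), qf P X v₀ t w = 1 := by
  simp only [qf]
  rw [Finset.sum_comm]
  rw [← ht]
  refine Finset.sum_congr rfl fun u hu => ?_
  rw [← Finset.sum_filter]
  have hfil : (ballF v₀ (t+1)).filter (fun w => Lambda.Adj u w) = nbrs u := by
    ext w
    rw [Finset.mem_filter, mem_nbrs]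
    exact ⟨fun h => h.2, fun h => ⟨nbrs_subset_ball v₀ hu ((mem_nbrs u w).2 h), h⟩⟩
  rw [hfil, Finset.sum_const, card_nbrs, nsmul_eq_mul,
    mul_div_cancel₀ _ (lamDeg_pos hX u).ne']

lemma sum_pf_one : ∀ t, ∑ u ∈ ballF v₀ t, pf P X t u = 1 := by
  intro t
  induction t with
  | zero =>
    show ∑ u ∈ ({v₀} : Finset _), pf P X 0 u = 1
    rw [Finset.sum_singleton, pf, hX.2.1, ENNReal.toReal_one]
  | succ t ih =>
    have h1 : ∑ w ∈ ballF v₀ (t+1), qf P X v₀ t w = 1 := sum_qf hX t ih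
    have h2 : ∑ w ∈ ballF v₀ (t+1), qf P X v₀ t w ≤ ∑ w ∈ ballF v₀ (t+1), pf P X (t+1) w :=
      Finset.sum_le_sum fun w _ => qf_le hX t w
    have h3 := sum_pf_le_one hX (t+1) (ballF v₀ (t+1))
    linarith

lemma pf_eq_qf (t : ℕ) {w : ℤ × ℤ_[2]} (hw : w ∈ ballF v₀ (t+1)) :
    pf P X (t+1) w = qf P X v₀ t w := by
  have h1 : ∑ w ∈ ballF v₀ (t+1), qf P X v₀ t w = 1 := sum_qf hX t (sum_pf_one hX t)
  have h2 : ∑ w ∈ ballF v₀ (t+1), pf P X (t+1) w = 1 := sum_pf_one hX (t+1)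
  have := (Finset.sum_eq_sum_iff_of_le (fun w _ => qf_le hX t w)).1 (h1.trans h2.symm)
  exact (this w hw).symm

lemma mgf_bound {l : ℝ} (hl : 0 ≤ l) :
    ∀ t, ∑ u ∈ ballF v₀ t, pf P X t u * exp (l * gfun u) ≤
      exp (l * gfun v₀) * (cosh (2*l) * exp (l/7))^t := by
  intro t
  induction t with
  | zero =>
    show ∑ u ∈ ({v₀} : Finset _), pf P X 0 u * exp (l * gfun u) ≤ _
    rw [Finset.sum_singleton, pf, hX.2.1, ENNReal.toReal_one, pow_zero, one_mul, mul_one]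
  | succ t ih =>
    have hK : 0 ≤ cosh (2*l) * exp (l/7) := by positivity
    have step1 : ∑ w ∈ ballF v₀ (t+1), pf P X (t+1) w * exp (l * gfun w) =
        ∑ u ∈ ballF v₀ t, ∑ w ∈ ballF v₀ (t+1),
          (if Lambda.Adj u w then pf P X t u / (lamDeg u : ℝ) * exp (l * gfun w) else 0) := by
      rw [Finset.sum_comm]
      refine Finset.sum_congr rfl fun w hw => ?_
      rw [pf_eq_qf hX t hw, qf, Finset.sum_mul]
      refine Finset.sum_congr rfl fun u hu => ?_
      rw [ite_mul, zero_mul]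
    have step2 : ∀ u ∈ ballF v₀ t,
        (∑ w ∈ ballF v₀ (t+1),
          if Lambda.Adj u w then pf P X t u / (lamDeg u : ℝ) * exp (l * gfun w) else 0) ≤
        pf P X t u * exp (l * gfun u) * (cosh (2*l) * exp (l/7)) := by
      intro u hu
      rw [← Finset.sum_filter]
      have hfil : (ballF v₀ (t+1)).filter (fun w => Lambda.Adj u w) = nbrs u := by
        ext w
        rw [Finset.mem_filter, mem_nbrs]
        exact ⟨fun h => h.2, fun h => ⟨nbrs_subset_ball v₀ hu ((mem_nbrs u w).2 h), h⟩⟩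
      rw [hfil, ← Finset.mul_sum]
      have hkey := key_vertex l hl u
      have hp : 0 ≤ pf P X t u / (lamDeg u : ℝ) :=
        div_nonneg (pf_nonneg t u) (lamDeg_pos hX u).le
      calc pf P X t u / (lamDeg u : ℝ) * ∑ w ∈ nbrs u, exp (l * gfun w)
          ≤ pf P X t u / (lamDeg u : ℝ) *
            ((lamDeg u : ℝ) * (cosh (2*l) * exp (l/7)) * exp (l * gfun u)) :=
            mul_le_mul_of_nonneg_left hkey hp
        _ = pf P X t u * exp (l * gfun u) * (cosh (2*l) * exp (l/7)) := by
            field_simp [(lamDeg_pos hX u).ne']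
    calc ∑ w ∈ ballF v₀ (t+1), pf P X (t+1) w * exp (l * gfun w)
        ≤ ∑ u ∈ ballF v₀ t, pf P X t u * exp (l * gfun u) * (cosh (2*l) * exp (l/7)) := by
          rw [step1]; exact Finset.sum_le_sum step2
      _ = (∑ u ∈ ballF v₀ t, pf P X t u * exp (l * gfun u)) * (cosh (2*l) * exp (l/7)) := by
          rw [Finset.sum_mul]
      _ ≤ (exp (l * gfun v₀) * (cosh (2*l) * exp (l/7))^t) * (cosh (2*l) * exp (l/7)) :=
          mul_le_mul_of_nonneg_right ih hK
      _ = exp (l * gfun v₀) * (cosh (2*l) * exp (l/7))^(t+1) := by ring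

lemma not_in_ball_null (t : ℕ) : P {ω | X t ω ∉ ballF v₀ t} = 0 := by
  have hU : P (⋃ u ∈ ballF v₀ t, {ω | X t ω = u}) = 1 := by
    rw [sum_pf_eq_measure hX t]
    have h2 : (∑ u ∈ ballF v₀ t, P {ω | X t ω = u}).toReal = 1 := by
      rw [ENNReal.toReal_sum (fun u _ => measure_ne_top P _)]
      exact sum_pf_one hX t
    have hne : (∑ u ∈ ballF v₀ t, P {ω | X t ω = u}) ≠ ∞ :=
      ENNReal.sum_ne_top.2 (fun u _ => measure_ne_top P _)
    rwa [ENNReal.toReal_eq_one_iff] at h2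
  have hmeas : MeasurableSet (⋃ u ∈ ballF v₀ t, {ω | X t ω = u}) :=
    (ballF v₀ t).measurableSet_biUnion (fun u _ => meas_ev hX t u)
  have hcompl : {ω | X t ω ∉ ballF v₀ t} = (⋃ u ∈ ballF v₀ t, {ω | X t ω = u})ᶜ := by
    ext ω
    simp [Set.mem_iUnion]
  rw [hcompl, measure_compl hmeas (measure_ne_top P _), hU, measure_univ, tsub_self]

omit hX in
lemma gfun_ge (u : ℤ × ℤ_[2]) : (u.1 : ℝ) - 4/21 ≤ gfun u := by
  rw [gfun]; split_ifs <;> norm_num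

lemma tail_bound {l : ℝ} (hl : 0 ≤ l) (t : ℕ) (a : ℝ) :
    P {ω | a ≤ ((X t ω).1 : ℝ)} ≤
      ENNReal.ofReal (exp (l * (4/21 - a)) *
        (exp (l * gfun v₀) * (cosh (2*l) * exp (l/7))^t)) := by
  set S := (ballF v₀ t).filter (fun u => a ≤ (u.1 : ℝ)) with hS
  have hsub : {ω | a ≤ ((X t ω).1 : ℝ)} ⊆
      (⋃ u ∈ S, {ω | X t ω = u}) ∪ {ω | X t ω ∉ ballF v₀ t} := by
    intro ω hω
    by_cases hb : X t ω ∈ ballF v₀ t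
    · left
      refine Set.mem_biUnion ?_ rfl
      exact Finset.mem_filter.2 ⟨hb, hω⟩
    · right; exact hb
  calc P {ω | a ≤ ((X t ω).1 : ℝ)}
      ≤ P ((⋃ u ∈ S, {ω | X t ω = u}) ∪ {ω | X t ω ∉ ballF v₀ t}) := measure_mono hsub
    _ ≤ P (⋃ u ∈ S, {ω | X t ω = u}) + P {ω | X t ω ∉ ballF v₀ t} := measure_union_le _ _
    _ = P (⋃ u ∈ S, {ω | X t ω = u}) := by rw [not_in_ball_null hX t, add_zero]
    _ = ∑ u ∈ S, P {ω | X t ω = u} := sum_pf_eq_measure hX t S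
    _ = ENNReal.ofReal (∑ u ∈ S, pf P X t u) := by
        rw [ENNReal.ofReal_sum_of_nonneg (fun u _ => pf_nonneg t u)]
        exact Finset.sum_congr rfl fun u _ => (ENNReal.ofReal_toReal (measure_ne_top P _)).symm
    _ ≤ _ := by
        refine ENNReal.ofReal_le_ofReal ?_
        have h1 : ∑ u ∈ S, pf P X t u ≤
            ∑ u ∈ S, exp (l * (4/21 - a)) * (pf P X t u * exp (l * gfun u)) := by
          refine Finset.sum_le_sum fun u hu => ?_
          have hua : a ≤ (u.1 : ℝ) := (Finset.mem_filter.1 hu).2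
          have hge : 0 ≤ l * (gfun u + (4/21 - a)) := by
            have := gfun_ge u
            have h0 : 0 ≤ gfun u + (4/21 - a) := by linarith
            positivity
          calc pf P X t u = pf P X t u * 1 := (mul_one _).symm
            _ ≤ pf P X t u * exp (l * (gfun u + (4/21 - a))) :=
                mul_le_mul_of_nonneg_left (Real.one_le_exp hge) (pf_nonneg t u)
            _ = exp (l * (4/21 - a)) * (pf P X t u * exp (l * gfun u)) := by
                rw [show l * (gfun u + (4/21 - a)) = l * gfun u + l * (4/21 - a) by ring,
                  Real.exp_add]
                ring
        have h2 : ∑ u ∈ S, exp (l * (4/21 - a)) * (pf P X t u * exp (l * gfun u)) ≤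
            ∑ u ∈ ballF v₀ t, exp (l * (4/21 - a)) * (pf P X t u * exp (l * gfun u)) := by
          refine Finset.sum_le_sum_of_subset_of_nonneg (Finset.filter_subset _ _)
            fun u _ _ => ?_
          have := pf_nonneg (P := P) (X := X) t u
          positivity
        simp only [← Finset.mul_sum] at h1 h2
        have h3 := mul_le_mul_of_nonneg_left (mgf_bound hX hl t) (Real.exp_nonneg (l * (4/21 - a)))
        linarith

end Walk

lemma nbrs_fst {u w : ℤ × ℤ_[2]} (hw : w ∈ nbrs u) : u.1 - 1 ≤ w.1 := by
  rw [nbrs] at hw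
  split_ifs at hw <;>
    simp only [Finset.mem_insert, Finset.mem_singleton] at hw <;>
    rcases hw with h | h | h | h <;> (try rw [h]) <;> (try simp) <;> omega

lemma ball_fst_lower (v₀ : ℤ × ℤ_[2]) : ∀ t : ℕ, ∀ u ∈ ballF v₀ t, v₀.1 - t ≤ u.1 := by
  intro t
  induction t with
  | zero =>
    intro u hu
    rw [Finset.mem_singleton.1 hu]
    simp
  | succ t ih =>
    intro u hu
    obtain ⟨x, hx, hux⟩ := Finset.mem_biUnion.1 hu
    have h1 := ih x hx
    have h2 := nbrs_fst hux
    push_cast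
    push_cast at h1
    omega

theorem walk_speed_le_one_seventh (v₀ : ℤ × ℤ_[2])
    (Ω : Type) [MeasurableSpace Ω] (P : Measure Ω) [IsProbabilityMeasure P]
    (X : ℕ → Ω → ℤ × ℤ_[2]) (hX : IsWalkL P X v₀) :
    ∀ᵐ ω ∂P, atTop.limsup (fun t : ℕ => ((X t ω).1 : ℝ) / t) ≤ 1 / 7 := by
  have key : ∀ n : ℕ, ∀ᵐ ω ∂P, ∀ᶠ t : ℕ in atTop,
      ¬((1/7 + 1/(n+1 : ℝ)) * t ≤ ((X t ω).1 : ℝ)) := by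
    intro n
    set ε : ℝ := 1/(n+1 : ℝ) with hε
    have hε0 : 0 < ε := by positivity
    set l : ℝ := ε/4 with hlval
    have hl0 : 0 < l := by positivity
    -- the contraction factor
    set r : ℝ := Real.exp (-(l*ε)) * Real.cosh (2*l) with hr
    have hr0 : 0 < r := by positivity
    have hr1 : r < 1 := by
      have hc : Real.cosh (2*l) ≤ Real.exp ((2*l)^2/2) := Real.cosh_le_exp_half_sq (2*l)
      have : r ≤ Real.exp (-(l*ε)) * Real.exp ((2*l)^2/2) :=
        mul_le_mul_of_nonneg_left hc (Real.exp_nonneg _)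
      rw [← Real.exp_add] at this
      have harg : -(l*ε) + (2*l)^2/2 = -2*l^2 := by rw [hlval]; ring
      rw [harg] at this
      have : Real.exp (-2*l^2) < 1 := by
        rw [Real.exp_lt_one_iff]; nlinarith
      linarith
    set C0 : ℝ := Real.exp (l * (4/21)) * Real.exp (l * gfun v₀) with hC0
    have hC00 : 0 ≤ C0 := by positivity
    -- tail bound for each t
    have htail : ∀ t : ℕ, P {ω | (1/7 + ε) * t ≤ ((X t ω).1 : ℝ)} ≤
        ENNReal.ofReal (C0 * r^t) := by
      intro t
      refine (tail_bound hX hl0.le t ((1/7 + ε) * t)).trans ?_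
      refine ENNReal.ofReal_le_ofReal (le_of_eq ?_)
      rw [show l * (4/21 - (1/7 + ε) * t) = l * (4/21) + (t : ℕ) * (-(l * (1/7 + ε))) by
        push_cast; ring]
      rw [Real.exp_add, Real.exp_nat_mul]
      rw [hC0, hr]
      have hcomb : Real.exp (-(l * (1/7 + ε))) * (Real.cosh (2*l) * Real.exp (l/7)) =
          Real.exp (-(l*ε)) * Real.cosh (2*l) := by
        rw [mul_comm (Real.cosh (2*l)) (Real.exp (l/7)), ← mul_assoc, ← Real.exp_add,
          show -(l * (1/7 + ε)) + l/7 = -(l*ε) by ring]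
      rw [← hcomb, mul_pow]
      ring
    have hsum : (∑' t : ℕ, P {ω | (1/7 + ε) * t ≤ ((X t ω).1 : ℝ)}) ≠ ∞ := by
      refine ne_top_of_le_ne_top ?_ (ENNReal.tsum_le_tsum htail)
      have heq : ∀ t : ℕ, ENNReal.ofReal (C0 * r^t) =
          ENNReal.ofReal C0 * (ENNReal.ofReal r)^t := by
        intro t
        rw [ENNReal.ofReal_mul hC00, ENNReal.ofReal_pow hr0.le]
      simp only [heq]
      rw [ENNReal.tsum_mul_left, ENNReal.tsum_geometric]
      refine ENNReal.mul_ne_top ENNReal.ofReal_ne_top ?_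
      rw [Ne, ENNReal.inv_eq_top, tsub_eq_zero_iff_le]
      exact fun h => absurd (lt_of_lt_of_le (ENNReal.ofReal_lt_one.2 hr1) h) (lt_irrefl _)
    have := ae_eventually_notMem (μ := P) hsum
    filter_upwards [this] with ω hω
    exact hω
  have hball : ∀ᵐ ω ∂P, ∀ t : ℕ, X t ω ∈ ballF v₀ t := by
    rw [ae_all_iff]
    intro t
    rw [ae_iff]
    exact not_in_ball_null hX t
  rw [← ae_all_iff] at key
  filter_upwards [key, hball] with ω hω hωb
  have hub : ∀ n : ℕ, ∀ᶠ t : ℕ in atTop, ((X t ω).1 : ℝ) / t ≤ 1/7 + 1/(n+1 : ℝ) := by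
    intro n
    filter_upwards [hω n, eventually_ge_atTop 1] with t hlt ht1
    push_neg at hlt
    have ht0 : (0:ℝ) < t := by exact_mod_cast ht1
    rw [div_le_iff₀ ht0]
    linarith [hlt.le]
  have hlb : ∀ᶠ t : ℕ in atTop, -(|(v₀.1 : ℝ)| + 1) ≤ ((X t ω).1 : ℝ) / t := by
    filter_upwards [eventually_ge_atTop 1] with t ht1
    have hb := ball_fst_lower v₀ t _ (hωb t)
    have ht0 : (0:ℝ) < t := by exact_mod_cast ht1
    rw [le_div_iff₀ ht0]
    have hbr : (v₀.1 : ℝ) - t ≤ ((X t ω).1 : ℝ) := by exact_mod_cast hb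
    have hA : (0:ℝ) ≤ |(v₀.1 : ℝ)| := abs_nonneg _
    have hA2 : -(|(v₀.1 : ℝ)|) ≤ (v₀.1 : ℝ) := neg_abs_le _
    have ht1' : (1:ℝ) ≤ t := by exact_mod_cast ht1
    nlinarith
  have hcob : IsCoboundedUnder (· ≤ ·) atTop (fun t : ℕ => ((X t ω).1 : ℝ) / t) :=
    isCoboundedUnder_le_of_eventually_le atTop hlb
  refine le_of_forall_pos_le_add fun η hη => ?_
  obtain ⟨n, hn⟩ := exists_nat_one_div_lt hη
  calc atTop.limsup (fun t : ℕ => ((X t ω).1 : ℝ) / t) ≤ 1/7 + 1/(n+1 : ℝ) :=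
        limsup_le_of_le hcob (hub n)
    _ ≤ 1/7 + η := by push_cast at hn ⊢; linarith
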